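/- arXiv:2407.11901 — 2 statements merged into one kernel-verified Lean document; each statement's English description precedes it below -/
import Mathlib

section
/- Let U : ℝ^d × [0,T] → ℝ be C² satisfying −∂ₜU + (1/(2λ))|∇ₓU|² = 0, and let x : [0,T] → ℝ^d solve x'(t) = −(1/λ)∇ₓU(x(t),t). Then for all t ∈ [0,T], x(t) = x(T) + ((T−t)/λ)·∇ₓU(x(T), T). -/
/-!
Write `F (z, t) = U z t`, `G = ∇ₓF` and `c = 1/λ`. Differentiating the Hamilton–Jacobi equation
`∂ₜF = (c/2) ‖G‖²` in a direction `v` gives `D²F (v, (0,1)) = c · D²F (v, (G,0))`. Along a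
trajectory with `x' = -c G`, the derivative of `⟪G (x t, t), w⟫` is `D²F ((-c G, 1), (w, 0))`, which
vanishes by the symmetry of `D²F` and that identity. So `G` is constant along the trajectory,
`x'` is the constant `-c G (x T, T)`, and `x` is affine.
-/

open Set InnerProductSpace
open scoped RealInnerProductSpace

theorem eq_right_of_hasDerivAt_zero {V : Type*} [NormedAddCommGroup V] [NormedSpace ℝ V]
    {f : ℝ → V} {a b : ℝ} (hf : ∀ t ∈ Icc a b, HasDerivAt f 0 t) {t : ℝ} (ht : t ∈ Icc a b) :
    f t = f b := by
  have hconst := constant_of_has_deriv_right_zero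
    (fun s hs => (hf s hs).continuousAt.continuousWithinAt)
    (fun s hs => (hf s (Ico_subset_Icc_self hs)).hasDerivWithinAt)
  rw [hconst t ht, hconst b ⟨ht.1.trans ht.2, le_rfl⟩]

theorem hasDerivAt_apply_prodMk_right {E V : Type*} [NormedAddCommGroup E] [NormedSpace ℝ E]
    [NormedAddCommGroup V] [NormedSpace ℝ V] {F : E × ℝ → V} {z : E} {t : ℝ}
    (hF : DifferentiableAt ℝ F (z, t)) :
    HasDerivAt (fun s => F (z, s)) (fderiv ℝ F (z, t) (0, 1)) t :=
  hF.hasFDerivAt.comp_hasDerivAt t ((hasDerivAt_const t z).prodMk (hasDerivAt_id t))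

section PartialGradient

variable {E : Type*} [NormedAddCommGroup E] [InnerProductSpace ℝ E] [CompleteSpace E]

noncomputable def toDualSymmComp {V : Type*} [NormedAddCommGroup V] [NormedSpace ℝ V]
    (i : E →L[ℝ] V) : (V →L[ℝ] ℝ) →L[ℝ] E :=
  (toDual ℝ E).symm.toLinearIsometry.toContinuousLinearMap ∘L
    (ContinuousLinearMap.compL ℝ E V ℝ).flip i

theorem inner_toDualSymmComp {V : Type*} [NormedAddCommGroup V] [NormedSpace ℝ V]
    (i : E →L[ℝ] V) (ℓ : V →L[ℝ] ℝ) (w : E) : ⟪toDualSymmComp i ℓ, w⟫ = ℓ (i w) := by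
  simp [toDualSymmComp, toDual_symm_apply]

/-- The spatial gradient `∇ₓF (z, t)` for `F` on space × time. -/
noncomputable def partialGradient (F : E × ℝ → ℝ) (p : E × ℝ) : E :=
  toDualSymmComp (.inl ℝ E ℝ) (fderiv ℝ F p)

variable {F : E × ℝ → ℝ}

theorem inner_partialGradient (p : E × ℝ) (w : E) :
    ⟪partialGradient F p, w⟫ = fderiv ℝ F p (w, 0) :=
  inner_toDualSymmComp _ _ w

theorem gradient_eq_partialGradient {z : E} {t : ℝ} (hF : DifferentiableAt ℝ F (z, t)) :
    gradient (fun y => F (y, t)) z = partialGradient F (z, t) := by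
  have hslice : HasFDerivAt (fun y => F (y, t)) (fderiv ℝ F (z, t) ∘L .inl ℝ E ℝ) z :=
    hF.hasFDerivAt.comp z (hasFDerivAt_prodMk_left z t)
  refine ext_inner_right ℝ fun w => ?_
  rw [gradient, toDual_symm_apply, hslice.fderiv, inner_partialGradient]
  rfl

theorem hasFDerivAt_partialGradient {p : E × ℝ} (h : DifferentiableAt ℝ (fderiv ℝ F) p) :
    HasFDerivAt (partialGradient F) (toDualSymmComp (.inl ℝ E ℝ) ∘L fderiv ℝ (fderiv ℝ F) p) p :=
  (toDualSymmComp _).hasFDerivAt.comp p h.hasFDerivAt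

theorem fderiv_fderiv_apply_time_eq {c : ℝ}
    (hHJ : ∀ q, fderiv ℝ F q (0, 1) = c / 2 * ‖partialGradient F q‖ ^ 2)
    {p : E × ℝ} (h : DifferentiableAt ℝ (fderiv ℝ F) p) (v : E × ℝ) :
    fderiv ℝ (fderiv ℝ F) p v (0, 1) = c * fderiv ℝ (fderiv ℝ F) p v (partialGradient F p, 0) := by
  have htime : HasFDerivAt (fun q => fderiv ℝ F q (0, 1))
      (ContinuousLinearMap.apply ℝ ℝ ((0 : E), (1 : ℝ)) ∘L fderiv ℝ (fderiv ℝ F) p) p :=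
    ((ContinuousLinearMap.apply ℝ ℝ _).hasFDerivAt (x := fderiv ℝ F p)).comp p h.hasFDerivAt
  have hnorm := ((hasFDerivAt_partialGradient h).norm_sq).const_mul (c / 2)
  rw [← funext hHJ] at hnorm
  have hv := congrArg (· v) (htime.unique hnorm)
  simp only [ContinuousLinearMap.comp_apply, smul_apply, ContinuousLinearMap.apply_apply,
    innerSL_apply_apply, smul_eq_mul, nsmul_eq_mul] at hv
  rw [hv, real_inner_comm, inner_toDualSymmComp, ContinuousLinearMap.inl_apply]
  ring

theorem hasDerivAt_partialGradient_characteristic (hF : ContDiff ℝ 2 F) {c : ℝ}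
    (hHJ : ∀ q, fderiv ℝ F q (0, 1) = c / 2 * ‖partialGradient F q‖ ^ 2)
    {x : ℝ → E} {t : ℝ} (hx : HasDerivAt x (-c • partialGradient F (x t, t)) t) :
    HasDerivAt (fun s => partialGradient F (x s, s)) 0 t := by
  have hF1 : DifferentiableAt ℝ (fderiv ℝ F) (x t, t) :=
    (hF.fderiv_right (m := 1) le_rfl).differentiable one_ne_zero _
  have hsymm : IsSymmSndFDerivAt ℝ F (x t, t) := hF.contDiffAt.isSymmSndFDerivAt (by simp)
  have hcurve : HasDerivAt (fun s => (x s, s)) (-c • partialGradient F (x t, t), (1 : ℝ)) t :=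
    hx.prodMk (hasDerivAt_id t)
  have hzero : (toDualSymmComp (.inl ℝ E ℝ) ∘L fderiv ℝ (fderiv ℝ F) (x t, t))
      (-c • partialGradient F (x t, t), 1) = 0 := by
    refine ext_inner_right ℝ fun w => ?_
    have hsplit : ((-c • partialGradient F (x t, t), 1) : E × ℝ)
        = -c • (partialGradient F (x t, t), 0) + (0, 1) := by
      simp
    rw [ContinuousLinearMap.comp_apply, inner_toDualSymmComp, ContinuousLinearMap.inl_apply,
      hsymm, hsplit, map_add, map_smul, fderiv_fderiv_apply_time_eq hHJ hF1, inner_zero_left,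
      smul_eq_mul]
    ring
  have h := (hasFDerivAt_partialGradient hF1).comp_hasDerivAt (f := fun s => (x s, s)) t hcurve
  rwa [hzero] at h

theorem eq_add_smul_partialGradient_of_characteristic (hF : ContDiff ℝ 2 F) {c : ℝ}
    (hHJ : ∀ q, fderiv ℝ F q (0, 1) = c / 2 * ‖partialGradient F q‖ ^ 2)
    {x : ℝ → E} {a b : ℝ} (hx : ∀ t ∈ Icc a b, HasDerivAt x (-c • partialGradient F (x t, t)) t)
    {t : ℝ} (ht : t ∈ Icc a b) :
    x t = x b + ((b - t) * c) • partialGradient F (x b, b) := by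
  have hgrad : ∀ s ∈ Icc a b, partialGradient F (x s, s) = partialGradient F (x b, b) :=
    fun s hs => eq_right_of_hasDerivAt_zero
      (fun r hr => hasDerivAt_partialGradient_characteristic hF hHJ (hx r hr)) hs
  have hline : ∀ s ∈ Icc a b,
      HasDerivAt (fun r => x r + (r * c) • partialGradient F (x b, b)) 0 s := by
    intro s hs
    have h := (hx s hs).add (((hasDerivAt_id s).mul_const c).smul_const (partialGradient F (x b, b)))
    rwa [hgrad s hs, one_mul, neg_smul, neg_add_cancel] at h
  have := eq_right_of_hasDerivAt_zero hline ht
  rw [sub_mul, sub_smul, ← add_sub_assoc, ← this]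
  abel

end PartialGradient

theorem stmt_5_general (d : ℕ) (lam T : ℝ)
    (U : EuclideanSpace ℝ (Fin d) → ℝ → ℝ)
    (hU : ContDiff ℝ 2 (fun p : EuclideanSpace ℝ (Fin d) × ℝ => U p.1 p.2))
    (hHJ : ∀ (x : EuclideanSpace ℝ (Fin d)) (t : ℝ),
      -(deriv (U x) t) + (1 / (2 * lam)) * ‖gradient (fun y => U y t) x‖ ^ 2 = 0)
    (x : ℝ → EuclideanSpace ℝ (Fin d))
    (hx : ∀ t ∈ Set.Icc (0 : ℝ) T,
      HasDerivAt x ((-(1 / lam)) • gradient (fun y => U y t) (x t)) t) :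
    ∀ t ∈ Set.Icc (0 : ℝ) T,
      x t = x T + ((T - t) / lam) • gradient (fun y => U y T) (x T) := by
  have hUd := hU.differentiable two_ne_zero
  have hHJ' : ∀ q, fderiv ℝ (fun p : EuclideanSpace ℝ (Fin d) × ℝ => U p.1 p.2) q (0, 1)
      = 1 / lam / 2 * ‖partialGradient (fun p => U p.1 p.2) q‖ ^ 2 := by
    rintro ⟨z, s⟩
    have htime : HasDerivAt (U z) _ s := hasDerivAt_apply_prodMk_right (hUd (z, s))
    rw [← htime.deriv, ← gradient_eq_partialGradient (hUd _)]
    linear_combination -hHJ z s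
  intro t ht
  rw [gradient_eq_partialGradient (hUd _), div_eq_mul_one_div]
  refine eq_add_smul_partialGradient_of_characteristic hU hHJ' (fun s hs => ?_) ht
  rw [← gradient_eq_partialGradient (hUd _)]
  exact hx s hs

/-- If U is C² and solves the HJ equation −∂ₜU + (1/(2λ))|∇ₓU|² = 0 and
x : [0,T] → ℝ^d solves x'(t) = −(1/λ)∇ₓU(x(t),t), then for all t ∈ [0,T],
x(t) = x(T) + ((T−t)/λ)·∇ₓU(x(T),T). -/
theorem stmt_5 (d : ℕ) (lam T : ℝ) (hlam : 0 < lam) (hT : 0 ≤ T)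
    (U : EuclideanSpace ℝ (Fin d) → ℝ → ℝ)
    (hU : ContDiff ℝ 2 (fun p : EuclideanSpace ℝ (Fin d) × ℝ => U p.1 p.2))
    (hHJ : ∀ (x : EuclideanSpace ℝ (Fin d)) (t : ℝ),
      -(deriv (U x) t) + (1 / (2 * lam)) * ‖gradient (fun y => U y t) x‖ ^ 2 = 0)
    (x : ℝ → EuclideanSpace ℝ (Fin d))
    (hx : ∀ t ∈ Set.Icc (0 : ℝ) T,
      HasDerivAt x ((-(1 / lam)) • gradient (fun y => U y t) (x t)) t) :
    ∀ t ∈ Set.Icc (0 : ℝ) T,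
      x t = x T + ((T - t) / lam) • gradient (fun y => U y T) (x T) :=
  stmt_5_general d lam T U hU hHJ x hx
end

section
/- Let (U₁, ρ₁) and (U₂, ρ₂) be smooth solutions on the flat torus Ω = 𝕋^d of the coupled system: −∂ₜUᵢ + (1/(2λ))|∇Uᵢ|² = 0 and ∂ₜρᵢ − ∇·(ρᵢ ∇Uᵢ/λ) = 0 for t ∈ [0,T], with ρᵢ ≥ 0. Then, setting U = U₁ − U₂ and ρ = ρ₁ − ρ₂, the identity d/dt ∫_Ω U ρ dx = −∫_Ω [ρ₁(H(∇U₂) − H(∇U₁) − ⟨∇U₂ − ∇U₁, ∇H(∇U₁)⟩) + ρ₂(H(∇U₁) − H(∇U₂) − ⟨∇U₁ − ∇U₂, ∇H(∇U₂)⟩)] dx holds, where H(p) = |p|²/(2λ); consequently d/dt ∫_Ω U ρ dx = −∫_Ω ((ρ₁+ρ₂)/(2λ)) |∇U₁ − ∇U₂|² dx ≤ 0. -/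
open MeasureTheory Set
open scoped RealInnerProductSpace

section Helpers

lemma cube_eq (d : ℕ) :
    {x : EuclideanSpace ℝ (Fin d) | ∀ i, x i ∈ Set.Icc (0:ℝ) 1} =
      (MeasurableEquiv.toLp 2 (Fin d → ℝ)).symm ⁻¹' (Set.Icc 0 1) := by
  ext x
  simp [Set.mem_Icc, Pi.le_def, forall_and]

lemma isCompact_cube (d : ℕ) :
    IsCompact {x : EuclideanSpace ℝ (Fin d) | ∀ i, x i ∈ Set.Icc (0:ℝ) 1} := by
  have h : {x : EuclideanSpace ℝ (Fin d) | ∀ i, x i ∈ Set.Icc (0:ℝ) 1} =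
      (EuclideanSpace.equiv (Fin d) ℝ).symm.toHomeomorph '' (Set.Icc 0 1) := by
    rw [cube_eq]
    ext x
    constructor
    · intro hx
      exact ⟨EuclideanSpace.equiv (Fin d) ℝ x, hx, rfl⟩
    · rintro ⟨y, hy, rfl⟩
      simpa [Set.mem_preimage] using hy
  rw [h]
  exact (isCompact_Icc).image (ContinuousLinearEquiv.continuous _)

lemma measurableSet_cube (d : ℕ) :
    MeasurableSet {x : EuclideanSpace ℝ (Fin d) | ∀ i, x i ∈ Set.Icc (0:ℝ) 1} := by
  rw [cube_eq]
  exact (MeasurableEquiv.toLp 2 (Fin d → ℝ)).symm.measurable measurableSet_Icc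

lemma insertNth_one_eq {n : ℕ} (i : Fin (n+1)) (x : Fin n → ℝ) :
    (Fin.insertNth i (1:ℝ) x : Fin (n+1) → ℝ)
      = (Fin.insertNth i (0:ℝ) x : Fin (n+1) → ℝ) + Pi.single i 1 := by
  funext j
  rcases eq_or_ne j i with rfl | hj
  · simp
  · rcases Fin.exists_succAbove_eq hj with ⟨k, rfl⟩
    simp [Fin.insertNth_apply_succAbove, Pi.single_apply, hj.symm]

lemma div_integral_zero {d : ℕ} (W : EuclideanSpace ℝ (Fin d) → EuclideanSpace ℝ (Fin d))
    (hW : ContDiff ℝ 1 W)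
    (hper : ∀ (x : EuclideanSpace ℝ (Fin d)) (i : Fin d), W (x + EuclideanSpace.single i 1) = W x) :
    ∫ x in {x : EuclideanSpace ℝ (Fin d) | ∀ i, x i ∈ Set.Icc (0:ℝ) 1},
      ∑ i, (fderiv ℝ W x (EuclideanSpace.single i 1)) i = 0 := by
  cases d with
  | zero => simp
  | succ n =>
    set eL : EuclideanSpace ℝ (Fin (n+1)) ≃L[ℝ] (Fin (n+1) → ℝ) :=
      EuclideanSpace.equiv (Fin (n+1)) ℝ with heL
    set g : (Fin (n+1) → ℝ) → (Fin (n+1) → ℝ) := fun y => eL (W (eL.symm y)) with hg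
    set g' : (Fin (n+1) → ℝ) → (Fin (n+1) → ℝ) →L[ℝ] (Fin (n+1) → ℝ) :=
      fun y => (eL : EuclideanSpace ℝ (Fin (n+1)) →L[ℝ] (Fin (n+1) → ℝ)).comp
        ((fderiv ℝ W (eL.symm y)).comp
          (eL.symm : (Fin (n+1) → ℝ) →L[ℝ] EuclideanSpace ℝ (Fin (n+1)))) with hg'
    have hWd : Differentiable ℝ W := hW.differentiable one_ne_zero
    have hgd : ∀ y, HasFDerivAt g (g' y) y := by
      intro y
      exact (eL.toContinuousLinearMap.hasFDerivAt.comp _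
        ((hWd (eL.symm y)).hasFDerivAt.comp y eL.symm.toContinuousLinearMap.hasFDerivAt))
    have hkey := MeasureTheory.integral_divergence_of_hasFDerivAt_off_countable
      (0 : Fin (n+1) → ℝ) 1 (by intro i; norm_num) g g' ∅ Set.countable_empty
      (by
        apply Continuous.continuousOn
        exact eL.continuous.comp (hW.continuous.comp eL.symm.continuous))
      (fun x _ => hgd x)
      (by
        apply ContinuousOn.integrableOn_compact isCompact_Icc
        apply Continuous.continuousOn
        have hcf : Continuous (fderiv ℝ W) := hW.continuous_fderiv one_ne_zero
        have hc2 : Continuous fun y : Fin (n+1) → ℝ => fderiv ℝ W (eL.symm y) :=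
          hcf.comp eL.symm.continuous
        apply continuous_finset_sum
        intro i _
        show Continuous fun y : Fin (n+1) → ℝ =>
          ((fderiv ℝ W (eL.symm y)) (eL.symm (Pi.single i 1))) i
        have hc3 : Continuous fun y : Fin (n+1) → ℝ =>
            (fderiv ℝ W (eL.symm y)) (eL.symm (Pi.single i 1)) :=
          (ContinuousLinearMap.apply ℝ (EuclideanSpace ℝ (Fin (n+1)))
            (eL.symm (Pi.single i 1))).continuous.comp hc2
        exact (EuclideanSpace.proj i).continuous.comp hc3)
    have hmp := (EuclideanSpace.volume_preserving_symm_measurableEquiv_toLp (Fin (n+1)))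
    have htrans :
        ∫ x in {x : EuclideanSpace ℝ (Fin (n+1)) | ∀ i, x i ∈ Set.Icc (0:ℝ) 1},
          ∑ i, (fderiv ℝ W x (EuclideanSpace.single i 1)) i
        = ∫ y in Set.Icc (0:Fin (n+1) → ℝ) 1, ∑ i, (g' y (Pi.single i 1)) i := by
      rw [cube_eq]
      rw [← hmp.setIntegral_preimage_emb
        (MeasurableEquiv.toLp 2 (Fin (n+1) → ℝ)).symm.measurableEmbedding]
      rfl
    rw [htrans, hkey]
    apply Finset.sum_eq_zero
    intro i _
    have : ∀ x : Fin n → ℝ, g (Fin.insertNth i (1:ℝ) x) i = g (Fin.insertNth i (0:ℝ) x) i := by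
      intro x
      rw [show (Fin.insertNth i (1:ℝ) x : Fin (n+1) → ℝ) = _ from insertNth_one_eq i x]
      show (W (eL.symm (Fin.insertNth i (0:ℝ) x + Pi.single i 1))) i = _
      rw [map_add]
      rw [show eL.symm (Pi.single i (1:ℝ)) = EuclideanSpace.single i 1 from rfl]
      rw [hper]
      rfl
    simp only [Pi.one_apply, Pi.zero_apply]
    rw [sub_eq_zero]
    exact setIntegral_congr_fun measurableSet_Icc (fun x _ => this x)

lemma contDiff_gradient {d : ℕ} {f : EuclideanSpace ℝ (Fin d) → ℝ} (hf : ContDiff ℝ (⊤ : ℕ∞) f) :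
    ContDiff ℝ (⊤ : ℕ∞) (fun x => gradient f x) := by
  have h1 : ContDiff ℝ (⊤ : ℕ∞) (fderiv ℝ f) := hf.fderiv_right (by simp)
  have h2 := (InnerProductSpace.toDual ℝ (EuclideanSpace ℝ (Fin d))).symm
    |>.toContinuousLinearEquiv.contDiff (n := ((⊤ : ℕ∞) : WithTop ℕ∞))
  exact h2.comp h1

lemma inner_gradient {d : ℕ} {f : EuclideanSpace ℝ (Fin d) → ℝ}
    (x v : EuclideanSpace ℝ (Fin d)) :
    ⟪gradient f x, v⟫ = fderiv ℝ f x v := by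
  rw [gradient]
  exact InnerProductSpace.toDual_symm_apply

lemma gradient_apply_coord {d : ℕ} {f : EuclideanSpace ℝ (Fin d) → ℝ}
    (x : EuclideanSpace ℝ (Fin d)) (i : Fin d) :
    gradient f x i = fderiv ℝ f x (EuclideanSpace.single i 1) := by
  rw [← inner_gradient, EuclideanSpace.inner_single_right]
  simp

lemma euclid_inner_eq_sum {d : ℕ} (a b : EuclideanSpace ℝ (Fin d)) :
    ⟪a, b⟫ = ∑ i, a i * b i := by
  simp [PiLp.inner_apply, RCLike.inner_apply, conj_trivial]
  exact Finset.sum_congr rfl fun i _ => mul_comm _ _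

lemma gradient_shift {d : ℕ} {u : EuclideanSpace ℝ (Fin d) → ℝ}
    (hu : ContDiff ℝ (⊤ : ℕ∞) u) (z : EuclideanSpace ℝ (Fin d))
    (hz : ∀ y, u (y + z) = u y) (x : EuclideanSpace ℝ (Fin d)) :
    gradient u (x + z) = gradient u x := by
  have hud : Differentiable ℝ u := hu.differentiable (by simp)
  have h1 : HasFDerivAt (fun y : EuclideanSpace ℝ (Fin d) => y + z)
      (ContinuousLinearMap.id ℝ _) x := (hasFDerivAt_id x).add_const z
  have h2 : HasFDerivAt (fun y => u (y + z))
      ((fderiv ℝ u (x + z)).comp (ContinuousLinearMap.id ℝ _)) x :=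
    (hud (x + z)).hasFDerivAt.comp x h1
  rw [ContinuousLinearMap.comp_id] at h2
  rw [funext hz] at h2
  have h3 : fderiv ℝ u (x + z) = fderiv ℝ u x := h2.unique (hud x).hasFDerivAt
  rw [gradient, gradient, h3]

end Helpers

set_option maxHeartbeats 2000000 in
/-- Lasry–Lions energy identity on the flat torus. For smooth (ℤ^d-periodic)
solutions (Uᵢ, ρᵢ) of the coupled HJ/continuity system with ρᵢ ≥ 0, setting
U = U₁ − U₂, ρ = ρ₁ − ρ₂ and H(p) = |p|²/(2λ),
d/dt ∫ U ρ = −∫ [ρ₁(H(∇U₂) − H(∇U₁) − ⟨∇U₂ − ∇U₁, ∇H(∇U₁)⟩)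
             + ρ₂(H(∇U₁) − H(∇U₂) − ⟨∇U₁ − ∇U₂, ∇H(∇U₂)⟩)]
  = −∫ ((ρ₁+ρ₂)/(2λ))|∇U₁ − ∇U₂|² ≤ 0,
where integrals are over the fundamental domain [0,1]^d. -/
theorem stmt_8 (d : ℕ) (lam T : ℝ) (hlam : 0 < lam) (hT : 0 < T)
    (U₁ U₂ ρ₁ ρ₂ : EuclideanSpace ℝ (Fin d) → ℝ → ℝ)
    (hU₁ : ContDiff ℝ (⊤ : ℕ∞) (fun p : EuclideanSpace ℝ (Fin d) × ℝ => U₁ p.1 p.2))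
    (hU₂ : ContDiff ℝ (⊤ : ℕ∞) (fun p : EuclideanSpace ℝ (Fin d) × ℝ => U₂ p.1 p.2))
    (hρ₁ : ContDiff ℝ (⊤ : ℕ∞) (fun p : EuclideanSpace ℝ (Fin d) × ℝ => ρ₁ p.1 p.2))
    (hρ₂ : ContDiff ℝ (⊤ : ℕ∞) (fun p : EuclideanSpace ℝ (Fin d) × ℝ => ρ₂ p.1 p.2))
    -- ℤ^d-periodicity in the spatial variable (so Ω is the flat torus 𝕋^d)
    (hper : ∀ f ∈ ({U₁, U₂, ρ₁, ρ₂} : Set (EuclideanSpace ℝ (Fin d) → ℝ → ℝ)),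
      ∀ (x : EuclideanSpace ℝ (Fin d)) (t : ℝ) (k : Fin d → ℤ),
        f (x + (EuclideanSpace.equiv (Fin d) ℝ).symm fun i => (k i : ℝ)) t = f x t)
    (hρ₁pos : ∀ x t, 0 ≤ ρ₁ x t) (hρ₂pos : ∀ x t, 0 ≤ ρ₂ x t)
    -- backward Hamilton-Jacobi equations: −∂ₜUᵢ + (1/(2λ))|∇Uᵢ|² = 0
    (hHJ₁ : ∀ x t, -(deriv (U₁ x) t) + (1 / (2 * lam)) * ‖gradient (fun y => U₁ y t) x‖ ^ 2 = 0)
    (hHJ₂ : ∀ x t, -(deriv (U₂ x) t) + (1 / (2 * lam)) * ‖gradient (fun y => U₂ y t) x‖ ^ 2 = 0)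
    -- continuity equations: ∂ₜρᵢ − ∇·(ρᵢ ∇Uᵢ/λ) = 0
    (hct₁ : ∀ x t, deriv (fun s => ρ₁ x s) t -
      (∑ i, (fderiv ℝ (fun y => (ρ₁ y t / lam) • gradient (fun z => U₁ z t) y) x
        (EuclideanSpace.single i 1)) i) = 0)
    (hct₂ : ∀ x t, deriv (fun s => ρ₂ x s) t -
      (∑ i, (fderiv ℝ (fun y => (ρ₂ y t / lam) • gradient (fun z => U₂ z t) y) x
        (EuclideanSpace.single i 1)) i) = 0) :
    ∀ t ∈ Set.Icc (0 : ℝ) T,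
      HasDerivAt
        (fun s => ∫ x in {x : EuclideanSpace ℝ (Fin d) | ∀ i, x i ∈ Set.Icc (0:ℝ) 1},
          (U₁ x s - U₂ x s) * (ρ₁ x s - ρ₂ x s))
        (-∫ x in {x : EuclideanSpace ℝ (Fin d) | ∀ i, x i ∈ Set.Icc (0:ℝ) 1},
          (ρ₁ x t * (‖gradient (fun y => U₂ y t) x‖ ^ 2 / (2 * lam)
              - ‖gradient (fun y => U₁ y t) x‖ ^ 2 / (2 * lam)
              - ⟪gradient (fun y => U₂ y t) x - gradient (fun y => U₁ y t) x,
                  (1 / lam) • gradient (fun y => U₁ y t) x⟫)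
            + ρ₂ x t * (‖gradient (fun y => U₁ y t) x‖ ^ 2 / (2 * lam)
              - ‖gradient (fun y => U₂ y t) x‖ ^ 2 / (2 * lam)
              - ⟪gradient (fun y => U₁ y t) x - gradient (fun y => U₂ y t) x,
                  (1 / lam) • gradient (fun y => U₂ y t) x⟫))) t ∧
      (-∫ x in {x : EuclideanSpace ℝ (Fin d) | ∀ i, x i ∈ Set.Icc (0:ℝ) 1},
          (ρ₁ x t * (‖gradient (fun y => U₂ y t) x‖ ^ 2 / (2 * lam)
              - ‖gradient (fun y => U₁ y t) x‖ ^ 2 / (2 * lam)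
              - ⟪gradient (fun y => U₂ y t) x - gradient (fun y => U₁ y t) x,
                  (1 / lam) • gradient (fun y => U₁ y t) x⟫)
            + ρ₂ x t * (‖gradient (fun y => U₁ y t) x‖ ^ 2 / (2 * lam)
              - ‖gradient (fun y => U₂ y t) x‖ ^ 2 / (2 * lam)
              - ⟪gradient (fun y => U₁ y t) x - gradient (fun y => U₂ y t) x,
                  (1 / lam) • gradient (fun y => U₂ y t) x⟫)))
        = -∫ x in {x : EuclideanSpace ℝ (Fin d) | ∀ i, x i ∈ Set.Icc (0:ℝ) 1},
            ((ρ₁ x t + ρ₂ x t) / (2 * lam)) *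
              ‖gradient (fun y => U₁ y t) x - gradient (fun y => U₂ y t) x‖ ^ 2 ∧
      (-∫ x in {x : EuclideanSpace ℝ (Fin d) | ∀ i, x i ∈ Set.Icc (0:ℝ) 1},
            ((ρ₁ x t + ρ₂ x t) / (2 * lam)) *
              ‖gradient (fun y => U₁ y t) x - gradient (fun y => U₂ y t) x‖ ^ 2) ≤ 0 := by
  intro t ht
  -- abbreviations
  have hQm := measurableSet_cube d
  have hQc := isCompact_cube d
  set Q := {x : EuclideanSpace ℝ (Fin d) | ∀ i, x i ∈ Set.Icc (0:ℝ) 1} with hQ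
  -- conjunct 2 and 3 via pointwise algebra
  have halg : ∀ x : EuclideanSpace ℝ (Fin d),
      (ρ₁ x t * (‖gradient (fun y => U₂ y t) x‖ ^ 2 / (2 * lam)
          - ‖gradient (fun y => U₁ y t) x‖ ^ 2 / (2 * lam)
          - ⟪gradient (fun y => U₂ y t) x - gradient (fun y => U₁ y t) x,
              (1 / lam) • gradient (fun y => U₁ y t) x⟫)
        + ρ₂ x t * (‖gradient (fun y => U₁ y t) x‖ ^ 2 / (2 * lam)
          - ‖gradient (fun y => U₂ y t) x‖ ^ 2 / (2 * lam)
          - ⟪gradient (fun y => U₁ y t) x - gradient (fun y => U₂ y t) x,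
              (1 / lam) • gradient (fun y => U₂ y t) x⟫))
      = ((ρ₁ x t + ρ₂ x t) / (2 * lam)) *
          ‖gradient (fun y => U₁ y t) x - gradient (fun y => U₂ y t) x‖ ^ 2 := by
    intro x
    set a := gradient (fun y => U₁ y t) x
    set b := gradient (fun y => U₂ y t) x
    have hcomm : ⟪b, a⟫ = ⟪a, b⟫ := real_inner_comm _ _
    have hns : ‖a - b‖ ^ 2 = ‖a‖ ^ 2 - 2 * ⟪a, b⟫ + ‖b‖ ^ 2 := norm_sub_sq_real a b
    simp only [inner_sub_left, real_inner_smul_right, hcomm, real_inner_self_eq_norm_sq, hns]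
    field_simp
    ring
  refine ⟨?_, ?_, ?_⟩
  · -- the Lasry–Lions derivative identity
    classical
    set z := fun i : Fin d => EuclideanSpace.single i (1:ℝ) with hzdef
    -- joint smooth integrand
    set φ : (EuclideanSpace ℝ (Fin d) × ℝ) → ℝ :=
      fun p => (U₁ p.1 p.2 - U₂ p.1 p.2) * (ρ₁ p.1 p.2 - ρ₂ p.1 p.2) with hφdef
    have hφ : ContDiff ℝ (⊤ : ℕ∞) φ := (hU₁.sub hU₂).mul (hρ₁.sub hρ₂)
    have hφc : Continuous φ := hφ.continuous
    have hfd : Continuous (fderiv ℝ φ) := hφ.continuous_fderiv (by simp)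
    have hF'c : Continuous fun p : EuclideanSpace ℝ (Fin d) × ℝ =>
        fderiv ℝ φ p ((0 : EuclideanSpace ℝ (Fin d)), (1:ℝ)) :=
      (ContinuousLinearMap.apply ℝ ℝ
        ((0 : EuclideanSpace ℝ (Fin d)), (1:ℝ))).continuous.comp hfd
    have hstep1 : ∀ (x : EuclideanSpace ℝ (Fin d)) (s : ℝ),
        HasDerivAt (fun s' => φ (x, s')) (fderiv ℝ φ (x, s) ((0 : EuclideanSpace ℝ (Fin d)), (1:ℝ))) s := by
      intro x s
      have hline : HasDerivAt (fun s' : ℝ => ((x, s') : EuclideanSpace ℝ (Fin d) × ℝ))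
          ((0 : EuclideanSpace ℝ (Fin d)), (1:ℝ)) s :=
        (hasDerivAt_const s x).prodMk (hasDerivAt_id s)
      exact (hφ.differentiable (by simp) (x, s)).hasFDerivAt.comp_hasDerivAt s hline
    obtain ⟨C, hC⟩ := (hQc.prod (isCompact_closedBall t 1)).exists_bound_of_continuousOn
      hF'c.continuousOn
    have hmain := hasDerivAt_integral_of_dominated_loc_of_deriv_le
      (μ := volume.restrict Q) (x₀ := t)
      (F := fun s x => φ (x, s))
      (F' := fun s x => fderiv ℝ φ (x, s) ((0 : EuclideanSpace ℝ (Fin d)), (1:ℝ)))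
      (bound := fun _ => C) (Metric.ball_mem_nhds t one_pos)
      (Filter.Eventually.of_forall fun s =>
        ((hφc.comp (continuous_id.prodMk continuous_const)).aestronglyMeasurable))
      ((hφc.comp (continuous_id.prodMk continuous_const)).continuousOn.integrableOn_compact hQc)
      ((hF'c.comp (continuous_id.prodMk continuous_const)).aestronglyMeasurable)
      ((ae_restrict_iff' hQm).2 (Filter.Eventually.of_forall fun x hx s hs =>
        hC (x, s) ⟨hx, Metric.ball_subset_closedBall hs⟩))
      (integrableOn_const hQc.measure_lt_top.ne)
      (Filter.Eventually.of_forall fun x s _ => hstep1 x s)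
    -- spatial sections are smooth
    have hsU₁ : ContDiff ℝ (⊤ : ℕ∞) (fun y => U₁ y t) := hU₁.comp (contDiff_id.prodMk contDiff_const)
    have hsU₂ : ContDiff ℝ (⊤ : ℕ∞) (fun y => U₂ y t) := hU₂.comp (contDiff_id.prodMk contDiff_const)
    have hsρ₁ : ContDiff ℝ (⊤ : ℕ∞) (fun y => ρ₁ y t) := hρ₁.comp (contDiff_id.prodMk contDiff_const)
    have hsρ₂ : ContDiff ℝ (⊤ : ℕ∞) (fun y => ρ₂ y t) := hρ₂.comp (contDiff_id.prodMk contDiff_const)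
    set V₁ : EuclideanSpace ℝ (Fin d) → EuclideanSpace ℝ (Fin d) :=
      fun y => (ρ₁ y t / lam) • gradient (fun z => U₁ z t) y with hV₁def
    set V₂ : EuclideanSpace ℝ (Fin d) → EuclideanSpace ℝ (Fin d) :=
      fun y => (ρ₂ y t / lam) • gradient (fun z => U₂ z t) y with hV₂def
    have hV₁sm : ContDiff ℝ (⊤ : ℕ∞) V₁ := (hsρ₁.div_const lam).smul (contDiff_gradient hsU₁)
    have hV₂sm : ContDiff ℝ (⊤ : ℕ∞) V₂ := (hsρ₂.div_const lam).smul (contDiff_gradient hsU₂)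
    set W : EuclideanSpace ℝ (Fin d) → EuclideanSpace ℝ (Fin d) :=
      fun y => (U₁ y t - U₂ y t) • (V₁ y - V₂ y) with hWdef
    have hWsm : ContDiff ℝ (⊤ : ℕ∞) W := (hsU₁.sub hsU₂).smul (hV₁sm.sub hV₂sm)
    -- periodicity of W under unit translations
    have hWper : ∀ (x : EuclideanSpace ℝ (Fin d)) (i : Fin d),
        W (x + EuclideanSpace.single i 1) = W x := by
      intro x i
      have hz : ((EuclideanSpace.equiv (Fin d) ℝ).symm
          fun j => (((Pi.single i 1 : Fin d → ℤ) j : ℤ) : ℝ)) = EuclideanSpace.single i (1:ℝ) := by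
        ext j
        show (((Pi.single i 1 : Fin d → ℤ) j : ℤ) : ℝ) = EuclideanSpace.single i (1:ℝ) j
        rw [EuclideanSpace.single_apply]
        by_cases h : j = i <;> simp [Pi.single_apply, h]
      have hp : ∀ f ∈ ({U₁, U₂, ρ₁, ρ₂} : Set (EuclideanSpace ℝ (Fin d) → ℝ → ℝ)),
          ∀ y : EuclideanSpace ℝ (Fin d), f (y + EuclideanSpace.single i 1) t = f y t := by
        intro f hf y
        have := hper f hf y t (Pi.single i 1)
        rwa [hz] at this
      have hpU₁ := hp U₁ (by simp)
      have hpU₂ := hp U₂ (by simp)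
      have hpρ₁ := hp ρ₁ (by simp)
      have hpρ₂ := hp ρ₂ (by simp)
      have hgs₁ := gradient_shift hsU₁ (EuclideanSpace.single i 1) (fun y => hpU₁ y) x
      have hgs₂ := gradient_shift hsU₂ (EuclideanSpace.single i 1) (fun y => hpU₂ y) x
      simp only [hWdef, hV₁def, hV₂def]
      rw [hpU₁, hpU₂, hpρ₁, hpρ₂, hgs₁, hgs₂]
    -- pointwise identity for the time derivative
    have hpoint : ∀ x : EuclideanSpace ℝ (Fin d),
        fderiv ℝ φ (x, t) ((0 : EuclideanSpace ℝ (Fin d)), (1:ℝ))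
        = -(ρ₁ x t * (‖gradient (fun y => U₂ y t) x‖ ^ 2 / (2 * lam)
              - ‖gradient (fun y => U₁ y t) x‖ ^ 2 / (2 * lam)
              - ⟪gradient (fun y => U₂ y t) x - gradient (fun y => U₁ y t) x,
                  (1 / lam) • gradient (fun y => U₁ y t) x⟫)
            + ρ₂ x t * (‖gradient (fun y => U₁ y t) x‖ ^ 2 / (2 * lam)
              - ‖gradient (fun y => U₂ y t) x‖ ^ 2 / (2 * lam)
              - ⟪gradient (fun y => U₁ y t) x - gradient (fun y => U₂ y t) x,
                  (1 / lam) • gradient (fun y => U₂ y t) x⟫))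
          + ∑ i, (fderiv ℝ W x (EuclideanSpace.single i 1)) i := by
      intro x
      have hdU₁ : DifferentiableAt ℝ (U₁ x) t :=
        ((hU₁.differentiable (by simp)).comp
          ((differentiable_const x).prodMk differentiable_id)).differentiableAt
      have hdU₂ : DifferentiableAt ℝ (U₂ x) t :=
        ((hU₂.differentiable (by simp)).comp
          ((differentiable_const x).prodMk differentiable_id)).differentiableAt
      have hdρ₁ : DifferentiableAt ℝ (ρ₁ x) t :=
        ((hρ₁.differentiable (by simp)).comp
          ((differentiable_const x).prodMk differentiable_id)).differentiableAt
      have hdρ₂ : DifferentiableAt ℝ (ρ₂ x) t :=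
        ((hρ₂.differentiable (by simp)).comp
          ((differentiable_const x).prodMk differentiable_id)).differentiableAt
      have hu1 : HasDerivAt (U₁ x) (1 / (2 * lam) * ‖gradient (fun y => U₁ y t) x‖ ^ 2) t := by
        have h := hdU₁.hasDerivAt
        have hv : deriv (U₁ x) t = 1 / (2 * lam) * ‖gradient (fun y => U₁ y t) x‖ ^ 2 := by
          have := hHJ₁ x t; linarith
        rwa [hv] at h
      have hu2 : HasDerivAt (U₂ x) (1 / (2 * lam) * ‖gradient (fun y => U₂ y t) x‖ ^ 2) t := by
        have h := hdU₂.hasDerivAt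
        have hv : deriv (U₂ x) t = 1 / (2 * lam) * ‖gradient (fun y => U₂ y t) x‖ ^ 2 := by
          have := hHJ₂ x t; linarith
        rwa [hv] at h
      have hr1 : HasDerivAt (ρ₁ x)
          (∑ i, (fderiv ℝ V₁ x (EuclideanSpace.single i 1)) i) t := by
        have h := hdρ₁.hasDerivAt
        have heta : deriv (fun s => ρ₁ x s) t = deriv (ρ₁ x) t := rfl
        have hv : deriv (ρ₁ x) t = ∑ i, (fderiv ℝ V₁ x (EuclideanSpace.single i 1)) i := by
          have h2 := hct₁ x t
          rw [heta, ← hV₁def] at h2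
          linarith
        rwa [hv] at h
      have hr2 : HasDerivAt (ρ₂ x)
          (∑ i, (fderiv ℝ V₂ x (EuclideanSpace.single i 1)) i) t := by
        have h := hdρ₂.hasDerivAt
        have heta : deriv (fun s => ρ₂ x s) t = deriv (ρ₂ x) t := rfl
        have hv : deriv (ρ₂ x) t = ∑ i, (fderiv ℝ V₂ x (EuclideanSpace.single i 1)) i := by
          have h2 := hct₂ x t
          rw [heta, ← hV₂def] at h2
          linarith
        rwa [hv] at h
      have hprod : HasDerivAt (fun s => φ (x, s))
          ((1 / (2 * lam) * ‖gradient (fun y => U₁ y t) x‖ ^ 2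
             - 1 / (2 * lam) * ‖gradient (fun y => U₂ y t) x‖ ^ 2) * (ρ₁ x t - ρ₂ x t)
           + (U₁ x t - U₂ x t) *
              ((∑ i, (fderiv ℝ V₁ x (EuclideanSpace.single i 1)) i)
                - ∑ i, (fderiv ℝ V₂ x (EuclideanSpace.single i 1)) i)) t :=
        (hu1.sub hu2).mul (hr1.sub hr2)
      have hval := (hstep1 x t).unique hprod
      -- divergence product rule
      have hWf : HasFDerivAt W
          ((U₁ x t - U₂ x t) • (fderiv ℝ V₁ x - fderiv ℝ V₂ x)
            + (fderiv ℝ (fun y => U₁ y t - U₂ y t) x).smulRight (V₁ x - V₂ x)) x := by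
        have hu := ((hsU₁.sub hsU₂).differentiable (by simp) x).hasFDerivAt
        have hv1 := (hV₁sm.differentiable (by simp) x).hasFDerivAt
        have hv2 := (hV₂sm.differentiable (by simp) x).hasFDerivAt
        exact hu.smul (hv1.sub hv2)
      have hWd := hWf.fderiv
      have hsubc : ∀ i : Fin d, (fderiv ℝ (fun y => U₁ y t - U₂ y t) x) (EuclideanSpace.single i 1)
          = gradient (fun y => U₁ y t) x i - gradient (fun y => U₂ y t) x i := by
        intro i
        rw [fderiv_fun_sub ((hsU₁.differentiable (by simp)) x) ((hsU₂.differentiable (by simp)) x)]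
        rw [gradient_apply_coord, gradient_apply_coord]
        simp
      have hdWsum : ∑ i, (fderiv ℝ W x (EuclideanSpace.single i 1)) i
          = ⟪gradient (fun y => U₁ y t) x - gradient (fun y => U₂ y t) x, V₁ x - V₂ x⟫
            + (U₁ x t - U₂ x t) *
              ((∑ i, (fderiv ℝ V₁ x (EuclideanSpace.single i 1)) i)
                - ∑ i, (fderiv ℝ V₂ x (EuclideanSpace.single i 1)) i) := by
        rw [euclid_inner_eq_sum, hWd]
        simp only [ContinuousLinearMap.add_apply, ContinuousLinearMap.coe_smul',
          Pi.smul_apply, ContinuousLinearMap.smulRight_apply, ContinuousLinearMap.sub_apply,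
          PiLp.add_apply, PiLp.smul_apply, PiLp.sub_apply, smul_eq_mul, hsubc]
        rw [Finset.sum_add_distrib, ← Finset.mul_sum, Finset.sum_sub_distrib]
        ring
      rw [hval, hdWsum]
      have hcomm : ⟪gradient (fun y => U₂ y t) x, gradient (fun y => U₁ y t) x⟫
          = ⟪gradient (fun y => U₁ y t) x, gradient (fun y => U₂ y t) x⟫ := real_inner_comm _ _
      simp only [hV₁def, hV₂def, inner_sub_left, inner_sub_right, real_inner_smul_right,
        real_inner_self_eq_norm_sq, hcomm]
      field_simp
      ring

    -- integrability on the cube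
    have hg₁c : Continuous (fun x => gradient (fun y => U₁ y t) x) :=
      (contDiff_gradient hsU₁).continuous
    have hg₂c : Continuous (fun x => gradient (fun y => U₂ y t) x) :=
      (contDiff_gradient hsU₂).continuous
    have hBc : Continuous fun x : EuclideanSpace ℝ (Fin d) =>
        (ρ₁ x t * (‖gradient (fun y => U₂ y t) x‖ ^ 2 / (2 * lam)
              - ‖gradient (fun y => U₁ y t) x‖ ^ 2 / (2 * lam)
              - ⟪gradient (fun y => U₂ y t) x - gradient (fun y => U₁ y t) x,
                  (1 / lam) • gradient (fun y => U₁ y t) x⟫)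
            + ρ₂ x t * (‖gradient (fun y => U₁ y t) x‖ ^ 2 / (2 * lam)
              - ‖gradient (fun y => U₂ y t) x‖ ^ 2 / (2 * lam)
              - ⟪gradient (fun y => U₁ y t) x - gradient (fun y => U₂ y t) x,
                  (1 / lam) • gradient (fun y => U₂ y t) x⟫)) := by
      have h1 : Continuous (fun x => ρ₁ x t) := hsρ₁.continuous
      have h2 : Continuous (fun x => ρ₂ x t) := hsρ₂.continuous
      have hi1 : Continuous fun x : EuclideanSpace ℝ (Fin d) =>
          ⟪gradient (fun y => U₂ y t) x - gradient (fun y => U₁ y t) x,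
            (1 / lam) • gradient (fun y => U₁ y t) x⟫ :=
        (hg₂c.sub hg₁c).inner (hg₁c.const_smul (1/lam))
      have hi2 : Continuous fun x : EuclideanSpace ℝ (Fin d) =>
          ⟪gradient (fun y => U₁ y t) x - gradient (fun y => U₂ y t) x,
            (1 / lam) • gradient (fun y => U₂ y t) x⟫ :=
        (hg₁c.sub hg₂c).inner (hg₂c.const_smul (1/lam))
      exact (h1.mul ((((hg₂c.norm.pow 2).div_const _).sub
          ((hg₁c.norm.pow 2).div_const _)).sub hi1)).add
        (h2.mul ((((hg₁c.norm.pow 2).div_const _).sub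
          ((hg₂c.norm.pow 2).div_const _)).sub hi2))
    have hdivWc : Continuous fun x : EuclideanSpace ℝ (Fin d) =>
        ∑ i, (fderiv ℝ W x (EuclideanSpace.single i 1)) i := by
      have hWc1 : Continuous (fderiv ℝ W) := hWsm.continuous_fderiv (by simp)
      apply continuous_finset_sum
      intro i _
      exact (EuclideanSpace.proj i).continuous.comp
        ((ContinuousLinearMap.apply ℝ (EuclideanSpace ℝ (Fin d))
          (EuclideanSpace.single i 1)).continuous.comp hWc1)
    -- compute the integral of the time derivative
    have hfinal : (∫ x in Q, fderiv ℝ φ (x, t) ((0 : EuclideanSpace ℝ (Fin d)), (1:ℝ)))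
        = -∫ x in Q,
          (ρ₁ x t * (‖gradient (fun y => U₂ y t) x‖ ^ 2 / (2 * lam)
              - ‖gradient (fun y => U₁ y t) x‖ ^ 2 / (2 * lam)
              - ⟪gradient (fun y => U₂ y t) x - gradient (fun y => U₁ y t) x,
                  (1 / lam) • gradient (fun y => U₁ y t) x⟫)
            + ρ₂ x t * (‖gradient (fun y => U₁ y t) x‖ ^ 2 / (2 * lam)
              - ‖gradient (fun y => U₂ y t) x‖ ^ 2 / (2 * lam)
              - ⟪gradient (fun y => U₁ y t) x - gradient (fun y => U₂ y t) x,
                  (1 / lam) • gradient (fun y => U₂ y t) x⟫)) := by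
      rw [setIntegral_congr_fun hQm (fun x _ => hpoint x)]
      have hIadd := integral_add ((hBc.neg.continuousOn).integrableOn_compact (μ := volume) hQc)
        ((hdivWc.continuousOn).integrableOn_compact (μ := volume) hQc)
      simp only [Pi.neg_apply] at hIadd
      rw [hIadd]
      rw [div_integral_zero W (hWsm.of_le (by simp)) hWper, add_zero, integral_neg]
    rw [← hfinal]
    exact hmain.2
  · congr 1
    exact setIntegral_congr_fun hQm (fun x _ => halg x)
  · rw [neg_nonpos]
    apply setIntegral_nonneg hQm
    intro x _
    have h1 : 0 ≤ (ρ₁ x t + ρ₂ x t) / (2 * lam) := by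
      apply div_nonneg
      · have := hρ₁pos x t; have := hρ₂pos x t; linarith
      · linarith
    positivity
end
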